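/- arXiv:2302.00834 — 3 statements merged into one kernel-verified Lean document; each statement's English description precedes it below -/
import Mathlib

section
/- Let σ(x) = max(0,x) be the ReLU activation and let W = (w_1,…,w_L) be a vector of positive integer widths. Let f ∈ Υ^W(ℝ), and let x_0 < x_1 < ⋯ < x_M be real numbers such that sign(f(x_i)) ≠ sign(f(x_{i+1})) for i = 0,…,M−1. Then M ≤ 3 · ∏_{i=1}^L (2 w_i). -/
noncomputable def sgn (x : ℝ) : ℝ := if 0 ≤ x then 1 else -1

/-- The hidden part of a feedforward network with widths `W`:
`σ ∘ A_{L-1} ∘ σ ∘ ⋯ ∘ σ ∘ A_0`, where `σ` acts coordinatewise. -/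
inductive IsHidden (σ : ℝ → ℝ) : (n : ℕ) → List ℕ → (m : ℕ) → ((Fin n → ℝ) → (Fin m → ℝ)) → Prop
  | nil (n : ℕ) : IsHidden σ n [] n id
  | cons {n m k : ℕ} {W : List ℕ} (M : Matrix (Fin m) (Fin n) ℝ) (b : Fin m → ℝ)
      {g : (Fin m → ℝ) → (Fin k → ℝ)} :
      IsHidden σ m W k g →
      IsHidden σ n (m :: W) k (fun x => g (fun j => σ (M.mulVec x j + b j)))

/-- The class `Υ^W(ℝ^d)` of networks `A_L ∘ σ ∘ A_{L-1} ∘ σ ∘ ⋯ ∘ σ ∘ A_0`. -/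
def NNclass (σ : ℝ → ℝ) (d : ℕ) (W : List ℕ) : Set ((Fin d → ℝ) → ℝ) :=
  {f | ∃ (m : ℕ) (g : (Fin d → ℝ) → (Fin m → ℝ)) (M : Matrix (Fin 1) (Fin m) ℝ) (b : ℝ),
        IsHidden σ d W m g ∧ ∀ x, f x = M.mulVec (g x) 0 + b}

/-- `Σ_{i=1}^{L-1} w_{i+1} w_i` for the list of widths. -/
def consecSum : List ℕ → ℕ
  | w1 :: w2 :: rest => w2 * w1 + consecSum (w2 :: rest)
  | _ => 0

/-- The number of parameters `P(W) = w_L + d w_1 + 1 + Σ_{i=1}^{L-1} w_{i+1} w_i + Σ_{i=1}^L w_i`. -/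
def numParams (d : ℕ) (W : List ℕ) : ℕ :=
  W.getLastD 0 + d * W.headI + 1 + consecSum W + W.sum

/-- `σ` is piecewise polynomial with `p` pieces, each of degree at most `D`:
there are breakpoints `c_1 < ⋯ < c_{p-1}` and polynomials `q_1, …, q_p` of degree `≤ D`
with `σ = q_i` on `[c_{i-1}, c_i)` (where `c_0 = -∞`, `c_p = ∞`). -/
def IsPiecewisePoly (σ : ℝ → ℝ) (p D : ℕ) : Prop :=
  0 < p ∧ ∃ (c : Fin (p - 1) → ℝ) (q : Fin p → Polynomial ℝ),
    StrictMono c ∧ (∀ i, (q i).natDegree ≤ D) ∧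
    ∀ (x : ℝ) (i : Fin p),
      (∀ j : Fin (p - 1), (j : ℕ) < (i : ℕ) → c j ≤ x) →
      (∀ j : Fin (p - 1), (i : ℕ) ≤ (j : ℕ) → x < c j) →
      σ x = (q i).eval x

/-- `g` is piecewise polynomial with at most `P` pieces, each of degree at most `D`. -/
def PiecewisePolyAtMost (g : ℝ → ℝ) (P D : ℕ) : Prop :=
  ∃ p ≤ P, IsPiecewisePoly g p D

/-- The class `Υ^W(ℝ)` of networks on a one-dimensional input. -/
def NNclass1 (σ : ℝ → ℝ) (W : List ℕ) : Set (ℝ → ℝ) :=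
  {f | ∃ F ∈ NNclass σ 1 W, ∀ t : ℝ, f t = F (fun _ => t)}

/-- `f` has at most `M` sign changes. -/
def AtMostSignChanges (f : ℝ → ℝ) (M : ℕ) : Prop :=
  ¬ ∃ x : Fin (M + 2) → ℝ, StrictMono x ∧
      ∀ i : Fin (M + 1), sgn (f (x i.castSucc)) ≠ sgn (f (x i.succ))


/-!
Each coordinate of each hidden layer, as a function of the input `t`, is piecewise affine.
If the breakpoints so far form a set `s`, a ReLU neuron only adds, in each of the `#s + 1` gaps
between them, the zero of its affine piece there; so a layer of width `w` turns `#s + 1` into at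
most `(#s + 1)(w + 1) ≤ (#s + 1) · 2w`. Hence the network is affine off fewer than `∏ 2wᵢ`
breakpoints. An affine function changes sign at most once, so any three consecutive points
`x_{3k} < x_{3k+1} < x_{3k+2}` enclose a breakpoint, whence `M ≤ 3 #s + 1`.
-/

open Set Matrix

def IsAffineOn (φ : ℝ → ℝ) (I : Set ℝ) : Prop :=
  ∃ a b : ℝ, EqOn φ (fun t => a * t + b) I

/-- Nothing is required at the breakpoints themselves, not even continuity. -/
def IsPiecewiseAffine (φ : ℝ → ℝ) (s : Finset ℝ) : Prop :=
  ∀ I : Set ℝ, I.OrdConnected → Disjoint I s → IsAffineOn φ I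

/-- The index `k ∈ {0, …, #s}` of the gap between consecutive breakpoints in which `t` lies. -/
noncomputable def gapIndex (s : Finset ℝ) (t : ℝ) : ℕ := (s.filter (· < t)).card

theorem isAffineOn_max_zero {I : Set ℝ} (hI : I.OrdConnected) {a b : ℝ} (hz : -b / a ∉ I) :
    IsAffineOn (fun t => max 0 (a * t + b)) I := by
  rcases eq_or_ne a 0 with rfl | ha
  · exact ⟨0, max 0 b, fun t _ => by simp⟩
  have hsign : (∀ t ∈ I, 0 ≤ a * t + b) ∨ ∀ t ∈ I, a * t + b ≤ 0 := by
    by_contra! ⟨⟨t₁, ht₁, hneg⟩, t₂, ht₂, hpos⟩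
    obtain ⟨t, ht, hzero⟩ := hI.isPreconnected.intermediate_value ht₁ ht₂
      (f := fun t => a * t + b) (by fun_prop) ⟨hneg.le, hpos.le⟩
    have : t = -b / a := (eq_div_iff ha).mpr (by linarith [hzero])
    exact hz (this ▸ ht)
  rcases hsign with hnonneg | hnonpos
  · exact ⟨a, b, fun t ht => max_eq_right (hnonneg t ht)⟩
  · exact ⟨0, 0, fun t ht => by simp [max_eq_left (hnonpos t ht)]⟩

theorem sgn_eq_or_sgn_eq_of_affine (a b : ℝ) {p q r : ℝ} (hpq : p ≤ q) (hqr : q ≤ r) :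
    sgn (a * p + b) = sgn (a * q + b) ∨ sgn (a * q + b) = sgn (a * r + b) := by
  have hbetween : 0 ≤ ((a * q + b) - (a * p + b)) * ((a * r + b) - (a * q + b)) := by
    linarith [mul_nonneg (sq_nonneg a) (mul_nonneg (sub_nonneg.2 hpq) (sub_nonneg.2 hqr))]
  unfold sgn
  split_ifs <;> first | (left; rfl) | (right; rfl) | nlinarith

section gapIndex

variable {s : Finset ℝ}

theorem gapIndex_mono (s : Finset ℝ) : Monotone (gapIndex s) :=
  fun _ _ htt' => Finset.card_le_card <|
    Finset.monotone_filter_right s fun _ _ hc => hc.trans_le htt'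

theorem gapIndex_le_card (s : Finset ℝ) (t : ℝ) : gapIndex s t ≤ s.card :=
  Finset.card_filter_le _ _

theorem gapIndex_eq_of_disjoint_Icc {t t' : ℝ} (htt' : t ≤ t') (hd : Disjoint (Icc t t') s) :
    gapIndex s t = gapIndex s t' := by
  refine congrArg Finset.card (Finset.filter_congr fun c hc => ⟨fun h => h.trans_le htt', ?_⟩)
  intro hct'
  by_contra! htc
  exact disjoint_left.mp hd ⟨htc, hct'.le⟩ hc

theorem gapIndex_lt_of_mem {c t t' : ℝ} (hc : c ∈ s) (htc : t ≤ c) (hct' : c < t') :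
    gapIndex s t < gapIndex s t' := by
  refine Finset.card_lt_card ⟨Finset.monotone_filter_right s fun _ _ h => ?_, fun hsub => ?_⟩
  · linarith
  · have := (Finset.mem_filter.mp (hsub (Finset.mem_filter.mpr ⟨hc, hct'⟩))).2
    linarith

theorem ordConnected_gap (s : Finset ℝ) (k : ℕ) :
    {t | t ∉ s ∧ gapIndex s t = k}.OrdConnected := by
  refine ⟨fun t₁ ⟨ht₁s, ht₁k⟩ t₂ ⟨ht₂s, ht₂k⟩ t ⟨ht₁t, htt₂⟩ =>
    ⟨fun hts => ?_, ?_⟩⟩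
  · have hlt := gapIndex_lt_of_mem hts ht₁t (htt₂.lt_of_ne fun h => ht₂s (h ▸ hts))
    omega
  · have := gapIndex_mono s ht₁t
    have := gapIndex_mono s htt₂
    omega

theorem gapIndex_eq_of_ordConnected {I : Set ℝ} (hI : I.OrdConnected) (hd : Disjoint I s)
    {t t' : ℝ} (ht : t ∈ I) (ht' : t' ∈ I) : gapIndex s t = gapIndex s t' := by
  rcases le_total t t' with htt' | ht't
  · exact gapIndex_eq_of_disjoint_Icc htt' (hd.mono_left (hI.out ht ht'))
  · exact (gapIndex_eq_of_disjoint_Icc ht't (hd.mono_left (hI.out ht' ht))).symm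

end gapIndex

theorem isPiecewiseAffine_id (s : Finset ℝ) : IsPiecewiseAffine (fun t => t) s :=
  fun _ _ _ => ⟨1, 0, fun t _ => by ring⟩

namespace IsPiecewiseAffine

variable {φ : ℝ → ℝ} {s : Finset ℝ}

theorem mono {s' : Finset ℝ} (hφ : IsPiecewiseAffine φ s) (hss' : s ⊆ s') :
    IsPiecewiseAffine φ s' :=
  fun I hI hd => hφ I hI (hd.mono_right (Finset.coe_subset.mpr hss'))

theorem mulVec_apply_add {m n : ℕ} {h : ℝ → Fin n → ℝ}
    (hh : ∀ l, IsPiecewiseAffine (fun t => h t l) s)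
    (A : Matrix (Fin m) (Fin n) ℝ) (j : Fin m) (c : ℝ) :
    IsPiecewiseAffine (fun t => (A *ᵥ h t) j + c) s := by
  intro I hI hd
  choose a b hab using fun l => hh l I hI hd
  refine ⟨(A *ᵥ a) j, (A *ᵥ b) j + c, fun t ht => ?_⟩
  have hht : h t = t • a + b := funext fun l => by simpa [add_comm, mul_comm] using hab l ht
  simp only [hht, Matrix.mulVec_add, Matrix.mulVec_smul, Pi.add_apply, Pi.smul_apply, smul_eq_mul]
  ring

theorem exists_gap_coeffs (hφ : IsPiecewiseAffine φ s) :
    ∃ a b : ℕ → ℝ, ∀ t ∉ s, φ t = a (gapIndex s t) * t + b (gapIndex s t) := by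
  have hgap : ∀ k, IsAffineOn φ {t | t ∉ s ∧ gapIndex s t = k} := fun k =>
    hφ _ (ordConnected_gap s k) (disjoint_left.mpr fun _ ht => ht.1)
  choose a b hab using hgap
  exact ⟨a, b, fun t ht => hab (gapIndex s t) ⟨ht, rfl⟩⟩

/-- Each gap contributes at most one new breakpoint: the zero of the affine piece there. -/
theorem exists_max_zero (hφ : IsPiecewiseAffine φ s) :
    ∃ Z : Finset ℝ, Z.card ≤ s.card + 1 ∧
      IsPiecewiseAffine (fun t => max 0 (φ t)) (s ∪ Z) := by
  obtain ⟨a, b, hab⟩ := hφ.exists_gap_coeffs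
  set Z := (Finset.range (s.card + 1)).image fun k => -b k / a k
  refine ⟨Z, Finset.card_image_le.trans (Finset.card_range _).le, fun I hI hd => ?_⟩
  rcases I.eq_empty_or_nonempty with rfl | ⟨t₀, ht₀⟩
  · exact ⟨0, 0, by simp⟩
  rw [Finset.coe_union, disjoint_union_right] at hd
  set k := gapIndex s t₀
  have hzero : -b k / a k ∉ I := fun hz => disjoint_left.mp hd.2 hz <|
    Finset.mem_image_of_mem _ (Finset.mem_range_succ_iff.mpr (gapIndex_le_card s t₀))
  obtain ⟨a', b', hmax⟩ := isAffineOn_max_zero hI hzero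
  refine ⟨a', b', fun t ht => ?_⟩
  have hts : t ∉ s := disjoint_left.mp hd.1 ht
  simp only [← hmax ht, hab t hts, gapIndex_eq_of_ordConnected hI hd.1 ht ht₀, k]

theorem exists_mem_Icc_of_sgn_ne (hφ : IsPiecewiseAffine φ s) {p q r : ℝ} (hpq : p ≤ q)
    (hqr : q ≤ r) (hpq' : sgn (φ p) ≠ sgn (φ q)) (hqr' : sgn (φ q) ≠ sgn (φ r)) :
    ∃ c ∈ s, c ∈ Icc p r := by
  by_contra! hs
  obtain ⟨a, b, hab⟩ :=
    hφ (Icc p r) ordConnected_Icc (disjoint_left.mpr fun c hc hcs => hs c hcs hc)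
  simp only [hab ⟨le_rfl, hpq.trans hqr⟩, hab ⟨hpq, hqr⟩, hab ⟨hpq.trans hqr, le_rfl⟩]
    at hpq' hqr'
  exact (sgn_eq_or_sgn_eq_of_affine a b hpq hqr).elim hpq' hqr'

/-- Every block `x_{3k} ≤ x_{3k+1} ≤ x_{3k+2}` of the sign-alternating points contains a
breakpoint, and these blocks are disjoint. -/
theorem le_three_mul_card_add_one_of_sgn_ne (hφ : IsPiecewiseAffine φ s) {M : ℕ}
    {x : Fin (M + 1) → ℝ} (hx : StrictMono x)
    (hsign : ∀ i : Fin M, sgn (φ (x i.castSucc)) ≠ sgn (φ (x i.succ))) :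
    M ≤ 3 * s.card + 1 := by
  have hsign' (n : ℕ) (hn : n + 1 < M + 1) :
      sgn (φ (x ⟨n, by omega⟩)) ≠ sgn (φ (x ⟨n + 1, hn⟩)) :=
    hsign ⟨n, by omega⟩
  obtain ⟨N, hNM, hMN⟩ : ∃ N, 3 * N ≤ M + 1 ∧ M + 1 < 3 * (N + 1) :=
    ⟨(M + 1) / 3, by omega, by omega⟩
  have hbreak (k : Fin N) :
      ∃ c ∈ s, c ∈ Icc (x ⟨3 * k, by omega⟩) (x ⟨3 * k + 2, by omega⟩) :=
    hφ.exists_mem_Icc_of_sgn_ne (hx.monotone (Fin.mk_le_mk.mpr (by omega)))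
      (hx.monotone (Fin.mk_le_mk.mpr (by omega))) (hsign' _ _) (hsign' _ _)
  choose c hcs hcI using hbreak
  have hc : StrictMono c := fun k k' hkk' =>
    (hcI k).2.trans_lt ((hx (Fin.mk_lt_mk.mpr (by omega))).trans_le (hcI k').1)
  have hNs : N ≤ s.card := by
    simpa using Finset.card_le_card_of_injOn (s := .univ) c (fun k _ => hcs k) hc.injective.injOn
  omega

end IsPiecewiseAffine

theorem exists_isPiecewiseAffine_reluLayer {m n : ℕ} {h : ℝ → Fin n → ℝ} {s : Finset ℝ}
    (hh : ∀ l, IsPiecewiseAffine (fun t => h t l) s) (A : Matrix (Fin m) (Fin n) ℝ)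
    (c : Fin m → ℝ) :
    ∃ s' : Finset ℝ, s'.card + 1 ≤ (s.card + 1) * (m + 1) ∧
      ∀ j, IsPiecewiseAffine (fun t => max 0 ((A *ᵥ h t) j + c j)) s' := by
  choose Z hZcard hZ using fun j =>
    (IsPiecewiseAffine.mulVec_apply_add hh A j (c j)).exists_max_zero
  refine ⟨s ∪ Finset.univ.biUnion Z, ?_, fun j => (hZ j).mono ?_⟩
  · have hsum : ∑ j, (Z j).card ≤ m * (s.card + 1) := by
      simpa using Finset.sum_le_card_nsmul Finset.univ (fun j => (Z j).card) _
        fun j _ => hZcard j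
    calc (s ∪ Finset.univ.biUnion Z).card + 1
        ≤ s.card + ∑ j, (Z j).card + 1 := by
          grw [Finset.card_union_le, Finset.card_biUnion_le]
      _ ≤ (s.card + 1) * (m + 1) := by nlinarith
  · exact Finset.union_subset_union_right (Finset.subset_biUnion_of_mem Z (Finset.mem_univ j))

theorem IsHidden.exists_isPiecewiseAffine {n k : ℕ} {W : List ℕ}
    {g : (Fin n → ℝ) → Fin k → ℝ} (hg : IsHidden (fun t => max 0 t) n W k g)
    {h : ℝ → Fin n → ℝ} {s : Finset ℝ}
    (hh : ∀ l, IsPiecewiseAffine (fun t => h t l) s) :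
    ∃ s' : Finset ℝ, s'.card + 1 ≤ (s.card + 1) * (W.map (· + 1)).prod ∧
      ∀ j, IsPiecewiseAffine (fun t => g (h t) j) s' := by
  induction hg generalizing s with
  | nil n => exact ⟨s, by simp, hh⟩
  | @cons n m k W A c g _ ih =>
    obtain ⟨s₁, hs₁, hh₁⟩ := exists_isPiecewiseAffine_reluLayer hh A c
    obtain ⟨s', hs', hg'⟩ := ih hh₁
    refine ⟨s', hs'.trans ?_, hg'⟩
    calc (s₁.card + 1) * (W.map (· + 1)).prod
        ≤ (s.card + 1) * (m + 1) * (W.map (· + 1)).prod := Nat.mul_le_mul_right _ hs₁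
      _ = (s.card + 1) * ((m :: W).map (· + 1)).prod := by simp [mul_assoc]

theorem relu_network_sign_change_bound_general
    (W : List ℕ) (hpos : ∀ w ∈ W, 0 < w)
    (f : ℝ → ℝ) (hf : f ∈ NNclass1 (fun t => max 0 t) W)
    (M : ℕ) (x : Fin (M + 1) → ℝ) (hx : StrictMono x)
    (hsign : ∀ i : Fin M, sgn (f (x i.castSucc)) ≠ sgn (f (x i.succ))) :
    M ≤ 3 * (W.map (fun w => 2 * w)).prod := by
  obtain ⟨F, ⟨m, g, A, c, hg, hF⟩, hfF⟩ := hf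
  obtain ⟨s, hs, hgs⟩ :=
    hg.exists_isPiecewiseAffine (h := fun t _ => t) fun _ => isPiecewiseAffine_id ∅
  have hfs : IsPiecewiseAffine f s := by
    convert IsPiecewiseAffine.mulVec_apply_add hgs A 0 c using 1
    exact funext fun t => (hfF t).trans (hF _)
  have hM := hfs.le_three_mul_card_add_one_of_sgn_ne hx hsign
  have hprod : (W.map (· + 1)).prod ≤ (W.map (fun w => 2 * w)).prod :=
    List.prod_le_prod' fun w hw => by have := hpos w hw; omega
  rw [Finset.card_empty, zero_add, one_mul] at hs
  omega

/-- A ReLU network `f ∈ Υ^W(ℝ)` has at most `3 ∏_{i=1}^L (2 w_i)`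
sign changes. -/
theorem relu_network_sign_change_bound
    (W : List ℕ) (hW : W ≠ []) (hpos : ∀ w ∈ W, 0 < w)
    (f : ℝ → ℝ) (hf : f ∈ NNclass1 (fun t => max 0 t) W)
    (M : ℕ) (x : Fin (M + 1) → ℝ) (hx : StrictMono x)
    (hsign : ∀ i : Fin M, sgn (f (x i.castSucc)) ≠ sgn (f (x i.succ))) :
    M ≤ 3 * (W.map (fun w => 2 * w)).prod :=
  relu_network_sign_change_bound_general W hpos f hf M x hx hsign
end

section
/- Let N be a positive even integer, let T ≥ 2N be an even integer, and let X_T = {i/T : i = 0,…,T−1}. Let M ≥ 1 and let F be a class of functions ℝ → ℝ such that every f ∈ F has at most M sign changes. If F shatters every N-element subset of X_T, then the number of distinct sign patterns |{(sign(f(i/T)))_{i=0}^{T−1} : f ∈ F}| is at least (T/(4M))^{N/2}. -/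
/-!
Pair the grid points `2k/T` and `(2k+1)/T`, `k < T/2`. Shattering the `N = 2s` points of any
`s` pairs yields a pattern that splits (takes both signs on) each of these pairs, while a function
with at most `M` sign changes splits at most `M` pairs, since choosing one point in each split
pair produces an alternating sequence. Hence each pattern accounts for at most `C(M, s)` of the
`C(T/2, s)` sets of pairs, and `(T/2 + 1 - s)^s ≤ s! C(T/2, s) ≤ s! C(M, s) K ≤ M^s K` for the
number `K` of patterns.
-/

open Finset

theorem sgn_eq_one_or_neg_one (x : ℝ) : sgn x = 1 ∨ sgn x = -1 := by
  unfold sgn; split_ifs <;> simp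

theorem sgn_eq_or_sgn_eq_of_ne {u v σ : ℝ} (huv : sgn u ≠ sgn v) (hσ : σ = 1 ∨ σ = -1) :
    sgn u = σ ∨ sgn v = σ := by
  rcases sgn_eq_one_or_neg_one u with hu | hu <;> rcases sgn_eq_one_or_neg_one v with hv | hv <;>
    rcases hσ with rfl | rfl <;> simp_all

section SignChanges

variable {f : ℝ → ℝ} {M : ℕ}

theorem not_atMostSignChanges_of_split_pairs (a b : Fin (M + 1) → ℝ)
    (hab : ∀ i, a i < b i) (hba : ∀ i j, i < j → b i < a j)
    (hsplit : ∀ i, sgn (f (a i)) ≠ sgn (f (b i))) : ¬ AtMostSignChanges f M := by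
  set τ : ℕ → ℝ := fun j => (-1) ^ j * sgn (f (a 0)) with hτ
  have hτ_pm : ∀ j, τ j = 1 ∨ τ j = -1 := fun j => by
    rcases neg_one_pow_eq_or ℝ j with h | h <;>
      rcases sgn_eq_one_or_neg_one (f (a 0)) with h' | h' <;> simp [hτ, h, h']
  have hτ_ne : ∀ j, τ j ≠ τ (j + 1) := fun j h => by
    have : τ (j + 1) = -τ j := by simp only [hτ, pow_succ]; ring
    rcases hτ_pm j with h' | h' <;> linarith
  have hpick : ∀ i, ∃ y, a i ≤ y ∧ y ≤ b i ∧ sgn (f y) = τ (i + 1) := fun i => by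
    rcases sgn_eq_or_sgn_eq_of_ne (hsplit i) (hτ_pm (i + 1)) with h | h
    exacts [⟨a i, le_rfl, (hab i).le, h⟩, ⟨b i, (hab i).le, le_rfl, h⟩]
  choose y hay hyb hy using hpick
  set x : Fin (M + 2) → ℝ := Fin.cons (a 0) y
  have hx_sgn : ∀ j, sgn (f (x j)) = τ j := by
    refine Fin.cases (by simp [x, hτ]) fun i => ?_
    simpa [x] using hy i
  have hx_mono : StrictMono x := by
    refine Fin.strictMono_iff_lt_succ.mpr (Fin.cases ?_ fun i => ?_)
    · have h0 : τ 0 = sgn (f (a 0)) := by simp [hτ]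
      have hy0 : a 0 ≠ y 0 := fun h => hτ_ne 0 (by rw [h0, h]; simpa using hy 0)
      simpa [x] using lt_of_le_of_ne (hay 0) hy0
    · simp only [x, ← Fin.succ_castSucc, Fin.cons_succ]
      exact (hyb _).trans_lt ((hba _ _ (Fin.castSucc_lt_succ (i := i))).trans_le (hay _))
  exact fun hf => hf ⟨x, hx_mono, fun i => by
    simpa [hx_sgn] using hτ_ne i⟩

theorem card_le_of_atMostSignChanges (hf : AtMostSignChanges f M) {ι : Type*} [LinearOrder ι]
    (a b : ι → ℝ) (hab : ∀ i, a i < b i) (hba : ∀ i j, i < j → b i < a j) (S : Finset ι)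
    (hS : ∀ i ∈ S, sgn (f (a i)) ≠ sgn (f (b i))) : S.card ≤ M := by
  by_contra! hcard
  obtain ⟨t, htS, ht⟩ := exists_subset_card_eq (Nat.succ_le_of_lt hcard)
  set e := t.orderEmbOfFin ht
  exact not_atMostSignChanges_of_split_pairs (a ∘ e) (b ∘ e) (fun i => hab _)
    (fun i j hij => hba _ _ (e.strictMono hij))
    (fun i => hS _ (htS (t.orderEmbOfFin_mem ht i))) hf

end SignChanges

theorem choose_card_le_choose_mul_card {α κ : Type*} [DecidableEq κ] {M s : ℕ}
    (U : Finset κ) (P : Finset α) (D : α → Finset κ) (hD : ∀ p ∈ P, (D p).card ≤ M)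
    (hcover : ∀ A ⊆ U, A.card = s → ∃ p ∈ P, A ⊆ D p) :
    U.card.choose s ≤ M.choose s * P.card :=
  calc U.card.choose s = (U.powersetCard s).card := (card_powersetCard s U).symm
    _ ≤ (P.biUnion fun p => (D p).powersetCard s).card := by
        refine card_le_card fun A hA => ?_
        obtain ⟨hAU, hAs⟩ := mem_powersetCard.mp hA
        obtain ⟨p, hp, hAp⟩ := hcover A hAU hAs
        exact mem_biUnion.mpr ⟨p, hp, mem_powersetCard.mpr ⟨hAp, hAs⟩⟩
    _ ≤ ∑ p ∈ P, ((D p).powersetCard s).card := card_biUnion_le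
    _ ≤ ∑ _p ∈ P, M.choose s := sum_le_sum fun p hp => by
        rw [card_powersetCard]; exact Nat.choose_le_choose s (hD p hp)
    _ = M.choose s * P.card := by rw [sum_const, smul_eq_mul, mul_comm]

theorem pow_div_le_of_choose_le {n s M K : ℕ} (hM : 0 < M) (h : n.choose s ≤ M.choose s * K) :
    (((n + 1 - s : ℕ) : ℝ) / M) ^ s ≤ K := by
  have hnat : (n + 1 - s) ^ s ≤ M ^ s * K :=
    calc (n + 1 - s) ^ s ≤ n.descFactorial s := Nat.pow_sub_le_descFactorial n s
      _ = s.factorial * n.choose s := Nat.descFactorial_eq_factorial_mul_choose n s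
      _ ≤ s.factorial * (M.choose s * K) := Nat.mul_le_mul_left _ h
      _ = M.descFactorial s * K := by rw [Nat.descFactorial_eq_factorial_mul_choose, mul_assoc]
      _ ≤ M ^ s * K := Nat.mul_le_mul_right _ (Nat.descFactorial_le_pow M s)
  rw [div_pow, div_le_iff₀ (by positivity), mul_comm]
  exact_mod_cast hnat

section Grid

variable (T : ℕ)

noncomputable def signPattern (f : ℝ → ℝ) (j : Fin T) : ℝ := sgn (f ((j : ℕ) / (T : ℝ)))

def pairFst (k : Fin (T / 2)) : Fin T := ⟨2 * k, by omega⟩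

def pairSnd (k : Fin (T / 2)) : Fin T := ⟨2 * k + 1, by omega⟩

noncomputable def splitPairs (p : Fin T → ℝ) : Finset (Fin (T / 2)) :=
  univ.filter fun k => p (pairFst T k) ≠ p (pairSnd T k)

theorem finite_image_signPattern (F : Set (ℝ → ℝ)) : (signPattern T '' F).Finite := by
  refine (Set.Finite.pi fun _ : Fin T => (Set.finite_singleton (-1 : ℝ)).insert 1).subset ?_
  rintro _ ⟨f, -, rfl⟩ j -
  exact sgn_eq_one_or_neg_one _

theorem card_splitPairs_signPattern_le {f : ℝ → ℝ} {M : ℕ} (hf : AtMostSignChanges f M) :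
    (splitPairs T (signPattern T f)).card ≤ M := by
  have hT : ∀ k : Fin (T / 2), (0 : ℝ) < T := fun k => by
    have := k.pos; exact_mod_cast (by omega : 0 < T)
  refine card_le_of_atMostSignChanges hf (fun k => ((pairFst T k : ℕ) : ℝ) / T)
    (fun k => ((pairSnd T k : ℕ) : ℝ) / T) (fun k => ?_) (fun k l hkl => ?_) _
    fun k hk => (mem_filter.mp hk).2
  · refine div_lt_div_of_pos_right ?_ (hT k)
    simp [pairFst, pairSnd]
  · refine div_lt_div_of_pos_right ?_ (hT k)
    have : (k : ℕ) < l := hkl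
    simp only [pairFst, pairSnd]
    exact_mod_cast (by omega : 2 * (k : ℕ) + 1 < 2 * l)

variable {T} {N : ℕ} {F : Set (ℝ → ℝ)}
  (hshatter : ∀ x : Fin N → ℝ, Function.Injective x →
      (∀ i, ∃ j : Fin T, x i = (j : ℕ) / (T : ℝ)) →
      ∀ ε : Fin N → ℝ, (∀ i, ε i = 1 ∨ ε i = -1) →
      ∃ f ∈ F, ∀ i, sgn (f (x i)) = ε i)
include hshatter

theorem exists_signPattern_eq_on (I : Finset (Fin T)) (hI : I.card = N) (ε : Fin T → ℝ)
    (hε : ∀ j, ε j = 1 ∨ ε j = -1) : ∃ f ∈ F, ∀ j ∈ I, signPattern T f j = ε j := by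
  set e := I.equivFinOfCardEq hI
  set g : Fin N → Fin T := fun i => e.symm i
  have hgrid : Function.Injective fun j : Fin T => ((j : ℕ) : ℝ) / T := fun j _ h =>
    Fin.val_injective (Nat.cast_injective ((div_left_inj' (by simp [j.pos.ne'])).mp h))
  have hg : Function.Injective g := Subtype.val_injective.comp e.symm.injective
  obtain ⟨f, hf, hsgn⟩ := hshatter _ (hgrid.comp hg) (fun i => ⟨g i, rfl⟩) (ε ∘ g) fun i => hε _
  refine ⟨f, hf, fun j hj => ?_⟩
  simpa [g, signPattern] using hsgn (e ⟨j, hj⟩)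

theorem exists_subset_splitPairs (A : Finset (Fin (T / 2))) (hA : N = 2 * A.card) :
    ∃ f ∈ F, A ⊆ splitPairs T (signPattern T f) := by
  have hFst : Function.Injective (pairFst T) := fun k l h => by
    simpa [pairFst, Fin.ext_iff] using h
  have hSnd : Function.Injective (pairSnd T) := fun k l h => by
    simpa [pairSnd, Fin.ext_iff] using h
  have hdisj : Disjoint (A.image (pairFst T)) (A.image (pairSnd T)) := by
    simp only [disjoint_left, mem_image]
    rintro _ ⟨k, -, rfl⟩ ⟨l, -, h⟩
    simp only [pairFst, pairSnd, Fin.ext_iff] at h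
    omega
  have hcard : (A.image (pairFst T) ∪ A.image (pairSnd T)).card = N := by
    rw [card_union_of_disjoint hdisj, card_image_of_injective _ hFst,
      card_image_of_injective _ hSnd, hA, two_mul]
  obtain ⟨f, hf, hsgn⟩ := exists_signPattern_eq_on hshatter _ hcard
    (fun j => if (j : ℕ) % 2 = 0 then 1 else -1) fun j => by split_ifs <;> simp
  refine ⟨f, hf, fun k hk => mem_filter.mpr ⟨mem_univ k, ?_⟩⟩
  rw [hsgn _ (mem_union_left _ (mem_image_of_mem _ hk)),
    hsgn _ (mem_union_right _ (mem_image_of_mem _ hk))]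
  norm_num [pairFst, pairSnd, Nat.add_mod]

end Grid

theorem sign_pattern_count_lower_bound_general
    (N T : ℕ) (hNe : Even N) (hT : 2 * N ≤ T)
    (M : ℕ) (hM : 1 ≤ M) (F : Set (ℝ → ℝ))
    (hsc : ∀ f ∈ F, AtMostSignChanges f M)
    (hshatter : ∀ x : Fin N → ℝ, Function.Injective x →
      (∀ i, ∃ j : Fin T, x i = (j : ℕ) / (T : ℝ)) →
      ∀ ε : Fin N → ℝ, (∀ i, ε i = 1 ∨ ε i = -1) →
      ∃ f ∈ F, ∀ i, sgn (f (x i)) = ε i) :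
    ((T : ℝ) / (4 * M)) ^ (N / 2) ≤
      (((fun f : ℝ → ℝ => fun j : Fin T => sgn (f ((j : ℕ) / (T : ℝ)))) '' F).ncard : ℝ) := by
  set s := N / 2
  have hN : N = 2 * s := by obtain ⟨r, rfl⟩ := hNe; omega
  have hfin := finite_image_signPattern T F
  have hcount : (T / 2).choose s ≤ M.choose s * hfin.toFinset.card := by
    simpa using choose_card_le_choose_mul_card univ hfin.toFinset (splitPairs T)
      (fun p hp => by
        obtain ⟨f, hf, rfl⟩ := hfin.mem_toFinset.mp hp
        exact card_splitPairs_signPattern_le T (hsc f hf))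
      (fun A _ hA => by
        obtain ⟨f, hf, hAf⟩ := exists_subset_splitPairs hshatter A (hA ▸ hN)
        exact ⟨_, hfin.mem_toFinset.mpr ⟨f, hf, rfl⟩, hAf⟩)
  change _ ≤ ((signPattern T '' F).ncard : ℝ)
  rw [Set.ncard_eq_toFinset_card _ hfin, ← div_div]
  refine le_trans (pow_le_pow_left₀ (by positivity) ?_ s) (pow_div_le_of_choose_le hM hcount)
  gcongr
  rw [div_le_iff₀ four_pos]
  exact_mod_cast (by omega : T ≤ (T / 2 + 1 - s) * 4)

/-- If every `f ∈ F` has at most `M` sign changes and `F` shatters every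
`N`-element subset of `X_T = {i/T : i = 0,…,T-1}` (with `N` even, `T ≥ 2N` even), then the
number of sign patterns realized by `F` on `X_T` is at least `(T/(4M))^{N/2}`. -/
theorem sign_pattern_count_lower_bound
    (N T : ℕ) (hN : 0 < N) (hNe : Even N) (hTe : Even T) (hT : 2 * N ≤ T)
    (M : ℕ) (hM : 1 ≤ M) (F : Set (ℝ → ℝ))
    (hsc : ∀ f ∈ F, AtMostSignChanges f M)
    (hshatter : ∀ x : Fin N → ℝ, Function.Injective x →
      (∀ i, ∃ j : Fin T, x i = (j : ℕ) / (T : ℝ)) →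
      ∀ ε : Fin N → ℝ, (∀ i, ε i = 1 ∨ ε i = -1) →
      ∃ f ∈ F, ∀ i, sgn (f (x i)) = ε i) :
    ((T : ℝ) / (4 * M)) ^ (N / 2) ≤
      (((fun f : ℝ → ℝ => fun j : Fin T => sgn (f ((j : ℕ) / (T : ℝ)))) '' F).ncard : ℝ) :=
  sign_pattern_count_lower_bound_general N T hNe hT M hM F hsc hshatter
end

section
/- There exists an absolute constant C > 0 with the following property. For every positive integers N and d, there is a vector of widths W (for the ReLU activation σ(x) = max(0,x)) with P(W) ≤ C(N + d) such that for any distinct points x_1,…,x_N ∈ ℝ^d and any values y_1,…,y_N ∈ ℝ, there exists f ∈ Υ^W(ℝ^d) with f(x_i) = y_i for all i = 1,…,N. -/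
/-!
Project the data onto a direction `v` separating all points; one exists because a vector space
over an infinite field is not a finite union of proper subspaces. After a shift making the
projections `t_i` nonnegative, a single ReLU unit passes them through unchanged, and a layer of
`N` ReLU units with breakpoints at the `t_i` interpolates arbitrary values: adding the points in
increasing order, each new value is matched by adjusting the unit at the previous maximum, which
vanishes at all earlier points. The widths `[1, N]` cost `3N + d + 2` parameters.
-/

open Finset Function

theorem exists_injective_dotProduct {K n ι : Type*} [Field K] [Infinite K] [Fintype n]
    [Finite ι] {x : ι → n → K} (hx : Injective x) :
    ∃ v : n → K, Injective fun i => v ⬝ᵥ x i := by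
  classical
  let p : {ij : ι × ι // ij.1 ≠ ij.2} → Subspace K (n → K) := fun ij =>
    LinearMap.ker ((dotProductBilin K K).flip (x ij.1.1 - x ij.1.2))
  have hp : ∀ ij, p ij ≠ ⊤ := by
    rintro ⟨⟨i, j⟩, hij⟩ htop
    obtain ⟨k, hk⟩ : ∃ k, (x i - x j) k ≠ 0 := ne_iff.mp (sub_ne_zero.mpr (hx.ne hij))
    have : Pi.single k 1 ∈ p ⟨(i, j), hij⟩ := htop ▸ Submodule.mem_top
    exact hk (by simpa [p] using this)
  obtain ⟨v, hv⟩ : ∃ v, v ∉ ⋃ ij, (p ij : Set (n → K)) := by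
    by_contra! h
    obtain ⟨ij, hij⟩ := Subspace.exists_eq_top_of_iUnion_eq_univ (Set.eq_univ_of_forall h)
    exact hp ij hij
  refine ⟨v, fun i j hvij => by_contra fun hij =>
    hv (Set.mem_iUnion.mpr ⟨⟨(i, j), hij⟩, ?_⟩)⟩
  simpa [p, dotProduct_sub, sub_eq_zero] using hvij

theorem exists_sum_relu_eq_on (S : Finset ℝ) (y : ℝ → ℝ) :
    ∃ (a : ℝ → ℝ) (b : ℝ), ∀ t ∈ S, ∑ u ∈ S, a u * max 0 (t - u) + b = y t := by
  classical
  induction S using induction_on_max with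
  | empty => exact ⟨0, 0, by simp⟩
  | insert m S hlt ih =>
    obtain ⟨a, b, hab⟩ := ih
    rcases S.eq_empty_or_nonempty with rfl | hS
    · exact ⟨0, y m, by simp⟩
    set p := S.max' hS
    have hpS : p ∈ S := S.max'_mem hS
    have hpm : p < m := hlt p hpS
    set δ := (y m - (∑ u ∈ S, a u * max 0 (m - u) + b)) / (m - p)
    refine ⟨fun u => a u + if u = p then δ else 0, b, fun t ht => ?_⟩
    have htm : t ≤ m := by
      rcases mem_insert.mp ht with rfl | ht
      exacts [le_rfl, (hlt t ht).le]
    have hsum : ∑ u ∈ insert m S, (a u + if u = p then δ else 0) * max 0 (t - u) + b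
        = ∑ u ∈ S, a u * max 0 (t - u) + b + δ * max 0 (t - p) := by
      rw [sum_insert fun hm => (hlt m hm).false, max_eq_left (by linarith)]
      simp only [add_mul, ite_mul, zero_mul, sum_add_distrib, sum_ite_eq', if_pos hpS,
        mul_zero]
      ring
    rw [hsum]
    rcases mem_insert.mp ht with rfl | ht
    · rw [max_eq_right (by linarith), div_mul_cancel₀ _ (by linarith)]
      ring
    · rw [max_eq_left (by linarith [S.le_max' t ht]), mul_zero, add_zero, hab t ht]

theorem exists_sum_relu_interpolating {ι : Type*} [Fintype ι] {s : ι → ℝ}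
    (hs : Injective s) (y : ι → ℝ) :
    ∃ (a : ι → ℝ) (b : ℝ), ∀ i, ∑ j, a j * max 0 (s i - s j) + b = y i := by
  classical
  obtain ⟨a, b, hab⟩ := exists_sum_relu_eq_on (univ.image s) (extend s y 0)
  refine ⟨a ∘ s, b, fun i => ?_⟩
  rw [← hs.extend_apply y 0, ← hab (s i) (mem_image_of_mem s (mem_univ i)),
    sum_image fun j _ k _ h => hs h]
  rfl

theorem ridge_network_mem_NNclass {σ : ℝ → ℝ} {d m : ℕ} (v : Fin d → ℝ) (β : ℝ)
    (c a : Fin m → ℝ) (b : ℝ) :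
    (fun x => ∑ j, a j * σ (σ (v ⬝ᵥ x + β) - c j) + b) ∈ NNclass σ d [1, m] := by
  refine ⟨m, _, Matrix.of fun _ => a, b,
    .cons (Matrix.of fun _ => v) (fun _ => β) (.cons (Matrix.of fun _ _ => 1) (-c) (.nil m)),
    fun x => ?_⟩
  simp [Matrix.mulVec, dotProduct, sub_eq_add_neg]

theorem numParams_one_cons (d m : ℕ) : numParams d [1, m] = 3 * m + d + 2 := by
  show m + d * 1 + 1 + (m * 1 + 0) + (1 + (m + 0)) = _
  ring

/-- `O(N + d)` parameters always suffice for ReLU networks to interpolate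
arbitrary values at arbitrary distinct points: there is an absolute constant `C` such that
for all `N, d ≥ 1` there is a ReLU architecture `W` with `P(W) ≤ C(N + d)` interpolating any
data `(x_i, y_i)_{i=1}^N` with distinct `x_i ∈ ℝ^d`. -/
theorem relu_interpolation_linear_parameters :
    ∃ C : ℝ, 0 < C ∧
      ∀ (N d : ℕ), 0 < N → 0 < d →
      ∃ W : List ℕ, W ≠ [] ∧ (∀ w ∈ W, 0 < w) ∧
        (numParams d W : ℝ) ≤ C * ((N : ℝ) + (d : ℝ)) ∧
        ∀ x : Fin N → (Fin d → ℝ), Function.Injective x →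
        ∀ y : Fin N → ℝ,
        ∃ f ∈ NNclass (fun t => max 0 t) d W, ∀ i, f (x i) = y i := by
  refine ⟨5, by norm_num, fun N d hN _ => ⟨[1, N], by simp, by simp [hN], ?_, ?_⟩⟩
  · rw [numParams_one_cons]
    have : (1 : ℝ) ≤ N := by exact_mod_cast hN
    push_cast
    linarith
  intro x hx y
  obtain ⟨v, hv⟩ := exists_injective_dotProduct hx
  set β := ∑ i, |v ⬝ᵥ x i|
  have hβ : ∀ i, 0 ≤ v ⬝ᵥ x i + β := fun i => by
    linarith [neg_abs_le (v ⬝ᵥ x i),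
      single_le_sum (fun j _ => abs_nonneg (v ⬝ᵥ x j)) (mem_univ i)]
  obtain ⟨a, b, hab⟩ := exists_sum_relu_interpolating (s := fun i => v ⬝ᵥ x i + β)
    (fun i j h => hv (add_right_cancel h)) y
  refine ⟨_, ridge_network_mem_NNclass v β (fun j => v ⬝ᵥ x j + β) a b, fun i => ?_⟩
  simpa only [max_eq_right (hβ i)] using hab i
end
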